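/- Let A, B be groups with subgroup families (A_i)_{i∈I_α}, (B_i)_{i∈I_β} both satisfying (FIRM): A_{I_α∖{i}} ≠ A_{I_α} for each i ∈ I_α and B_{I_β∖{i}} ≠ B_{I_β} for each i ∈ I_β. Then in G = A * B, with G_i defined as ⟨A_i, B⟩ for i ∈ I_α and ⟨A, B_i⟩ for i ∈ I_β, the family (G_i) satisfies (FIRM): for each i ∈ I := I_α ⊔ I_β, G_{I∖{i}} ≠ G_I. Conversely, if (G_i) satisfies (FIRM) then so do (A_i) and (B_i). -/

import Mathlib

open scoped Monoid.Coprod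

/-!
For `H ≤ A` and `K ≤ B`, the subgroup `⟨H, K⟩ = H.map inl ⊔ K.map inr` of `A ∗ B` determines `H`
and `K`: pulling it back along `inl` gives `H`, because the retraction `fst : A ∗ B →* A` maps it
into `H` (and symmetrically for `B`). Moreover an element lies in `⟨H, K⟩` exactly when every
letter of its reduced word lies in `H` or `K`, so `⨅ t, ⟨H t, K t⟩ = ⟨⨅ t, H t, ⨅ t, K t⟩`.
Hence `G_J = ⟨A_{J ∩ Iα}, B_{J ∩ Iβ}⟩`, and `G_{I ∖ {i}} = G_I` can be tested on the two
components separately; for `i ∈ Iα` the `B`-components agree and the `A`-components are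
`A_{Iα ∖ {i}}` and `A_{Iα}`.
-/

namespace Monoid.CoprodI

variable {ι : Type*} {G : ι → Type*} [∀ i, Group (G i)]

def Word.LettersIn (H : ∀ i, Subgroup (G i)) (w : Word G) : Prop :=
  ∀ l ∈ w.toList, l.2 ∈ H l.1

theorem Word.lettersIn_empty (H : ∀ i, Subgroup (G i)) : Word.empty.LettersIn H :=
  fun _ h => absurd h List.not_mem_nil

section DecidableEq

variable [DecidableEq ι] [∀ i, DecidableEq (G i)]

theorem Word.lettersIn_of_smul {H : ∀ i, Subgroup (G i)} {i : ι} {m : G i} (hm : m ∈ H i)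
    {w : Word G} (hw : w.LettersIn H) : (of m • w).LettersIn H := by
  rintro ⟨j, m'⟩ hl
  rcases Word.mem_smul_iff.mp hl with ⟨-, hl⟩ | ⟨-, rfl, hl | ⟨m'', hm'', rfl⟩ | ⟨-, rfl⟩⟩
  · exact hw _ hl
  · exact hw _ (List.mem_of_mem_tail hl)
  · exact mul_mem hm (hw _ (List.mem_of_mem_head? hm''))
  · exact hm

theorem Word.lettersIn_smul_of_mem_iSup {H : ∀ i, Subgroup (G i)} {x : CoprodI G}
    (hx : x ∈ ⨆ i, (H i).map of) {w : Word G} (hw : w.LettersIn H) : (x • w).LettersIn H := by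
  refine Subgroup.iSup_induction _
    (C := fun x => ∀ w : Word G, w.LettersIn H → (x • w).LettersIn H) hx ?_
    (fun w hw => by rwa [one_smul]) (fun x y hx hy w hw => by rw [mul_smul]; exact hx _ (hy w hw))
    w hw
  rintro i _ ⟨m, hm, rfl⟩ w hw
  exact Word.lettersIn_of_smul hm hw

theorem mem_iSup_map_of_iff (H : ∀ i, Subgroup (G i)) (x : CoprodI G) :
    x ∈ ⨆ i, (H i).map of ↔ (Word.equiv x).LettersIn H := by
  refine ⟨fun hx => Word.lettersIn_smul_of_mem_iSup hx (Word.lettersIn_empty H), fun hx => ?_⟩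
  rw [← Word.equiv.symm_apply_apply x]
  refine Subgroup.list_prod_mem _ fun y hy => ?_
  obtain ⟨l, hl, rfl⟩ := List.mem_map.mp hy
  exact Subgroup.mem_iSup_of_mem l.1 (Subgroup.mem_map_of_mem _ (hx l hl))

end DecidableEq

theorem iInf_iSup_map_of {κ : Sort*} (H : κ → ∀ i, Subgroup (G i)) :
    ⨅ t, ⨆ i, (H t i).map of = ⨆ i, (⨅ t, H t i).map (of : G i →* CoprodI G) := by
  classical
  ext x
  simp only [Subgroup.mem_iInf, mem_iSup_map_of_iff, Word.LettersIn]
  exact ⟨fun h l hl t => h t l hl, fun h t l hl => h l hl t⟩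

end Monoid.CoprodI

namespace Monoid.Coprod

section BoolFamily

universe u v
variable (A : Type u) (B : Type v) [Group A] [Group B]

/-- `A` and `B` as a `Bool`-indexed family, lifted to a common universe so that reduced words
of `Monoid.CoprodI` become available for `A ∗ B`. -/
abbrev boolFamily : Bool → Type max u v := fun b => cond b (ULift.{v} A) (ULift.{u} B)

instance : ∀ b, Group (boolFamily A B b)
  | true => ULift.group
  | false => ULift.group

noncomputable def mulEquivCoprodI : A ∗ B ≃* CoprodI (boolFamily A B) :=
  MonoidHom.toMulEquiv
    (lift ((CoprodI.of (i := true)).comp (MulEquiv.ulift.symm : A ≃* ULift A).toMonoidHom)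
      ((CoprodI.of (i := false)).comp (MulEquiv.ulift.symm : B ≃* ULift B).toMonoidHom))
    (CoprodI.lift fun
      | true => inl.comp (MulEquiv.ulift : ULift A ≃* A).toMonoidHom
      | false => inr.comp (MulEquiv.ulift : ULift B ≃* B).toMonoidHom)
    (by ext <;> rfl)
    (CoprodI.ext_hom _ _ fun | true => by ext; rfl | false => by ext; rfl)

variable {A B}

def boolSubgroups (H : Subgroup A) (K : Subgroup B) : ∀ b, Subgroup (boolFamily A B b)
  | true => H.comap (MulEquiv.ulift : ULift A ≃* A).toMonoidHom
  | false => K.comap (MulEquiv.ulift : ULift B ≃* B).toMonoidHom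

theorem boolSubgroups_iInf {κ : Sort*} (H : κ → Subgroup A) (K : κ → Subgroup B) (b : Bool) :
    boolSubgroups (⨅ t, H t) (⨅ t, K t) b = ⨅ t, boolSubgroups (H t) (K t) b := by
  cases b <;> exact Subgroup.comap_iInf _ _

theorem map_mulEquivCoprodI_sup (H : Subgroup A) (K : Subgroup B) :
    (H.map inl ⊔ K.map inr).map (mulEquivCoprodI A B : A ∗ B →* CoprodI (boolFamily A B))
      = ⨆ b, (boolSubgroups H K b).map CoprodI.of := by
  simp only [Subgroup.map_sup, iSup_bool_eq, Subgroup.map_map, boolSubgroups,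
    Subgroup.comap_equiv_eq_map_symm']
  congr 2

end BoolFamily

variable {A B : Type*} [Group A] [Group B]

theorem iInf_sup_map_inl_inr {κ : Sort*} (H : κ → Subgroup A) (K : κ → Subgroup B) :
    ⨅ t, ((H t).map inl ⊔ (K t).map inr)
      = (⨅ t, H t).map inl ⊔ (⨅ t, K t).map (inr : B →* A ∗ B) := by
  apply (mulEquivCoprodI A B).mapSubgroup.injective
  simp only [OrderIso.map_iInf, MulEquiv.mapSubgroup_apply, map_mulEquivCoprodI_sup,
    CoprodI.iInf_iSup_map_of, boolSubgroups_iInf]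

theorem sup_map_inl_inr_le_comap_fst (H : Subgroup A) (K : Subgroup B) :
    H.map inl ⊔ K.map inr ≤ H.comap (fst : A ∗ B →* A) := by
  rw [sup_le_iff, Subgroup.map_le_iff_le_comap, Subgroup.map_le_iff_le_comap,
    Subgroup.comap_comap, Subgroup.comap_comap, fst_comp_inl, fst_comp_inr]
  exact ⟨(Subgroup.comap_id H).ge, fun _ _ => one_mem H⟩

theorem sup_map_inl_inr_le_comap_snd (H : Subgroup A) (K : Subgroup B) :
    H.map inl ⊔ K.map inr ≤ K.comap (snd : A ∗ B →* B) := by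
  rw [sup_le_iff, Subgroup.map_le_iff_le_comap, Subgroup.map_le_iff_le_comap,
    Subgroup.comap_comap, Subgroup.comap_comap, snd_comp_inl, snd_comp_inr]
  exact ⟨fun _ _ => one_mem K, (Subgroup.comap_id K).ge⟩

theorem comap_inl_sup_map_inl_inr (H : Subgroup A) (K : Subgroup B) :
    (H.map inl ⊔ K.map inr).comap (inl : A →* A ∗ B) = H :=
  le_antisymm (fun _ ha => sup_map_inl_inr_le_comap_fst H K ha)
    (Subgroup.map_le_iff_le_comap.mp le_sup_left)

theorem comap_inr_sup_map_inl_inr (H : Subgroup A) (K : Subgroup B) :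
    (H.map inl ⊔ K.map inr).comap (inr : B →* A ∗ B) = K :=
  le_antisymm (fun _ hb => sup_map_inl_inr_le_comap_snd H K hb)
    (Subgroup.map_le_iff_le_comap.mp le_sup_right)

theorem sup_map_inl_inr_inj {H H' : Subgroup A} {K K' : Subgroup B} :
    H.map inl ⊔ K.map inr = H'.map inl ⊔ K'.map (inr : B →* A ∗ B) ↔ H = H' ∧ K = K' := by
  refine ⟨fun h => ⟨?_, ?_⟩, fun ⟨hH, hK⟩ => hH ▸ hK ▸ rfl⟩
  · rw [← comap_inl_sup_map_inl_inr H K, h, comap_inl_sup_map_inl_inr]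
  · rw [← comap_inr_sup_map_inl_inr H K, h, comap_inr_sup_map_inl_inr]

end Monoid.Coprod

/-- The family `(G_i)` of maximal parabolic subgroups of the free product `A ∗ B`
satisfies (FIRM) if and only if both `(A_i)` and `(B_i)` satisfy (FIRM). -/
theorem stmt_12 {A B : Type*} [Group A] [Group B]
    {Iα Iβ : Type*} [Fintype Iα] [Fintype Iβ] [DecidableEq Iα] [DecidableEq Iβ]
    (Ai : Iα → Subgroup A) (Bi : Iβ → Subgroup B)
    (Gi : Iα ⊕ Iβ → Subgroup (A ∗ B))
    (hGα : ∀ i : Iα, Gi (Sum.inl i)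
        = (Ai i).map (Monoid.Coprod.inl : A →* A ∗ B)
          ⊔ (⊤ : Subgroup B).map (Monoid.Coprod.inr : B →* A ∗ B))
    (hGβ : ∀ i : Iβ, Gi (Sum.inr i)
        = (⊤ : Subgroup A).map (Monoid.Coprod.inl : A →* A ∗ B)
          ⊔ (Bi i).map (Monoid.Coprod.inr : B →* A ∗ B)) :
    ((∀ i : Iα, (⨅ j ∈ ({i}ᶜ : Finset Iα), Ai j) ≠ ⨅ j, Ai j) ∧
     (∀ i : Iβ, (⨅ j ∈ ({i}ᶜ : Finset Iβ), Bi j) ≠ ⨅ j, Bi j)) ↔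
    (∀ i : Iα ⊕ Iβ, (⨅ j ∈ ({i}ᶜ : Finset (Iα ⊕ Iβ)), Gi j) ≠ ⨅ j, Gi j) := by
  obtain rfl : Gi = fun j => (Sum.elim Ai (fun _ => ⊤) j).map Monoid.Coprod.inl
      ⊔ (Sum.elim (fun _ => ⊤) Bi j).map (Monoid.Coprod.inr : B →* A ∗ B) :=
    funext (Sum.rec hGα hGβ)
  simp only [Monoid.Coprod.iInf_sup_map_inl_inr, ne_eq, Monoid.Coprod.sup_map_inl_inr_inj,
    Sum.forall]
  simp [iInf_sum]
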